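/- Let T_1 and T_2 be vertex-disjoint trees with distinguished vertices u_1 ∈ V(T_1) and u_2 ∈ V(T_2), and suppose there are bipartite labelings f_1 of T_1 and f_2 of T_2 with f_1(u_1) = f_2(u_2) = 0. Then the amalgamation T_1 ∘ T_2 obtained by identifying u_1 with u_2 admits a bipartite labeling f with at least ε(f_1) + ε(f_2) distinct edge weights; consequently α(T_1 ∘ T_2) ≥ ε(f_1) + ε(f_2). -/

import Mathlib

open SimpleGraph

/-- The weight of an edge under a vertex labeling: `|f u - f v|`. -/
def edgeWt {V : Type*} (f : V → ℕ) : Sym2 V → ℕ :=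
  Sym2.lift ⟨fun u v => ((f u : ℤ) - f v).natAbs, fun u v => by simp only []; omega⟩

/-- `f` is a graceful labeling of `G`: injective into `{0,...,m}` with induced
edge weights exactly `{1,...,m}`, where `m` is the number of edges. -/
def IsGracefulLabeling {V : Type*} (G : SimpleGraph V) (f : V → ℕ) : Prop :=
  Function.Injective f ∧ (∀ v, f v ≤ G.edgeSet.ncard) ∧
    (edgeWt f) '' G.edgeSet = Set.Icc 1 G.edgeSet.ncard

/-- `G` admits a graceful labeling. -/
def IsGraceful {V : Type*} (G : SimpleGraph V) : Prop :=
  ∃ f : V → ℕ, IsGracefulLabeling G f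

/-- `p` is a longest path in `G`. -/
def IsLongestPath {V : Type*} (G : SimpleGraph V) {u v : V} (p : G.Walk u v) : Prop :=
  p.IsPath ∧ ∀ (w x : V) (q : G.Walk w x), q.IsPath → q.length ≤ p.length

/-- `G` is a tree all of whose vertices are within distance `k` of some longest path.
`k = 1` gives caterpillars, `k = 2` gives lobsters. -/
def IsKDistantTree {V : Type*} (G : SimpleGraph V) (k : ℕ) : Prop :=
  G.IsTree ∧ ∃ (u v : V) (p : G.Walk u v), IsLongestPath G p ∧
    ∀ a : V, ∃ b ∈ p.support, G.dist a b ≤ k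

/-- `G` is a lobster shell: a lobster with a longest path `P` such that every vertex not
on `P` having a neighbor on `P` has degree exactly `2`. -/
def IsLobsterShell {V : Type*} (G : SimpleGraph V) : Prop :=
  G.IsTree ∧ ∃ (u v : V) (p : G.Walk u v), IsLongestPath G p ∧
    (∀ a : V, ∃ b ∈ p.support, G.dist a b ≤ 2) ∧
    (∀ a : V, a ∉ p.support → (∃ b ∈ p.support, G.Adj a b) → (G.neighborSet a).ncard = 2)

/-- `f` is a bipartite labeling of `G`. -/
def IsBipartiteLabeling {V : Type*} (G : SimpleGraph V) (f : V → ℕ) : Prop :=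
  Function.Injective f ∧ (∀ v, f v ≤ G.edgeSet.ncard) ∧
    ∃ c : ℤ, ∀ u v : V, G.Adj u v →
      ((f u : ℤ) ≤ c ∧ c < (f v : ℤ)) ∨ ((f v : ℤ) ≤ c ∧ c < (f u : ℤ))

/-- The number of distinct edge weights induced by `f` on `G`. -/
noncomputable def distinctWeightCount {V : Type*} (G : SimpleGraph V) (f : V → ℕ) : ℕ :=
  ((edgeWt f) '' G.edgeSet).ncard

/-- The amalgamation `T₁ ∘ T₂`, obtained by identifying `u₁ ∈ V(T₁)` with `u₂ ∈ V(T₂)`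
(the vertex `Sum.inl u₁` plays the role of the identified vertex). -/
def amalgam {V₁ V₂ : Type*} (T₁ : SimpleGraph V₁) (T₂ : SimpleGraph V₂)
    (u₁ : V₁) (u₂ : V₂) : SimpleGraph (V₁ ⊕ {v : V₂ // v ≠ u₂}) :=
  SimpleGraph.fromRel (fun a b =>
    match a, b with
    | Sum.inl x, Sum.inl y => T₁.Adj x y
    | Sum.inl x, Sum.inr y => x = u₁ ∧ T₂.Adj u₂ y.1
    | Sum.inr x, Sum.inr y => T₂.Adj x.1 y.1
    | _, _ => False)

/-!
Cut each labeling at a threshold `dᵢ` separating its two colour classes. The labels of `T₂` are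
shifted up by `d₁`, so its weights stay in `[1, m₂]` and `u₂` gets the label `d₁`. The labels of
`T₁` are folded around `d₁`: `f ↦ d₁ - f` below the cut and `f ↦ m₁ + m₂ + 1 + d₁ - f` above it,
so `u₁` also gets `d₁` and every weight `w` of `T₁` becomes `m₁ + m₂ + 1 - w ∈ [m₂ + 1, m₁ + m₂]`.
The two weight sets are therefore disjoint, and the glued labeling is cut at `d₁ + d₂`.
-/

open Function

variable {V W : Type*}

lemma edgeWt_mk (f : V → ℕ) (u v : V) : edgeWt f s(u, v) = ((f u : ℤ) - f v).natAbs := rfl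

lemma edgeWt_map (f : W → ℕ) (φ : V → W) (e : Sym2 V) :
    edgeWt f (e.map φ) = edgeWt (f ∘ φ) e := by
  induction e using Sym2.ind with
  | _ u v => rfl

lemma edgeWt_add_const (f : V → ℕ) (k : ℕ) : edgeWt (fun v => f v + k) = edgeWt f := by
  funext e
  induction e using Sym2.ind with
  | _ u v => simp only [edgeWt_mk]; omega

lemma edgeWt_le {f : V → ℕ} {m : ℕ} (hf : ∀ v, f v ≤ m) (e : Sym2 V) : edgeWt f e ≤ m := by
  induction e using Sym2.ind with
  | _ u v => have := hf u; have := hf v; simp only [edgeWt_mk]; omega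

lemma SimpleGraph.Hom.image_edgeWt_comp_subset {G : SimpleGraph V} {H : SimpleGraph W}
    (φ : G →g H) (g : W → ℕ) : edgeWt (g ∘ φ) '' G.edgeSet ⊆ edgeWt g '' H.edgeSet := by
  rintro _ ⟨e, he, rfl⟩
  exact ⟨e.map φ, φ.map_mem_edgeSet he, edgeWt_map g φ e⟩

def SeparatesAt (G : SimpleGraph V) (f : V → ℕ) (d : ℕ) : Prop :=
  ∀ u v, G.Adj u v → (f u ≤ d ↔ d < f v)

namespace SeparatesAt

variable {G : SimpleGraph V} {f g : V → ℕ} {d d' : ℕ}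

lemma of_le_iff (h : SeparatesAt G f d) (hg : ∀ v, g v ≤ d' ↔ f v ≤ d) :
    SeparatesAt G g d' := by
  intro u v huv
  rw [hg u, ← not_le, hg v, not_le]
  exact h u v huv

lemma add_const (h : SeparatesAt G f d) (k : ℕ) : SeparatesAt G (fun v => f v + k) (d + k) :=
  h.of_le_iff fun _ => Nat.add_le_add_iff_right

lemma isBipartiteLabeling (h : SeparatesAt G f d) (hinj : Injective f)
    (hle : ∀ v, f v ≤ G.edgeSet.ncard) : IsBipartiteLabeling G f :=
  ⟨hinj, hle, d, fun u v huv => by have := h u v huv; omega⟩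

end SeparatesAt

namespace IsBipartiteLabeling

variable {G : SimpleGraph V} {f : V → ℕ}

lemma finite (hf : IsBipartiteLabeling G f) : Finite V :=
  Finite.of_injective (fun v => (⟨f v, Nat.lt_succ_of_le (hf.2.1 v)⟩ : Fin (G.edgeSet.ncard + 1)))
    fun _ _ h => hf.1 (congrArg Fin.val h)

lemma exists_separatesAt (hf : IsBipartiteLabeling G f) :
    ∃ d ≤ G.edgeSet.ncard, SeparatesAt G f d := by
  obtain ⟨-, hle, c, hc⟩ := hf
  refine ⟨min c.toNat G.edgeSet.ncard, min_le_right _ _, fun u v huv => ?_⟩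
  have := hle u; have := hle v; have := hc u v huv
  omega

end IsBipartiteLabeling

def reflectLabeling (f : V → ℕ) (d N : ℕ) (v : V) : ℕ :=
  if f v ≤ d then d - f v else N + d - f v

section reflectLabeling

variable {G : SimpleGraph V} {f : V → ℕ} {d N : ℕ}

lemma reflectLabeling_le_add_iff {k : ℕ} (hN : ∀ v, f v + k < N) (v : V) :
    reflectLabeling f d N v ≤ d + k ↔ f v ≤ d := by
  have := hN v
  unfold reflectLabeling
  split_ifs <;> omega

lemma reflectLabeling_injective (hf : Injective f) (hN : ∀ v, f v < N) :
    Injective (reflectLabeling f d N) := by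
  intro u v huv
  have := hN u; have := hN v
  unfold reflectLabeling at huv
  exact hf (by split_ifs at huv <;> omega)

lemma reflectLabeling_lt (hd : d < N) (v : V) : reflectLabeling f d N v < N := by
  unfold reflectLabeling
  split_ifs <;> omega

lemma image_edgeWt_reflectLabeling (hsep : SeparatesAt G f d) (hN : ∀ v, f v ≤ N) :
    edgeWt (reflectLabeling f d N) '' G.edgeSet = (N - ·) '' (edgeWt f '' G.edgeSet) := by
  rw [Set.image_image]
  refine Set.image_congr fun e he => ?_
  induction e using Sym2.ind with
  | _ u v =>
    have := hsep u v he; have := hN u; have := hN v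
    simp only [edgeWt_mk, reflectLabeling]
    split_ifs <;> omega

end reflectLabeling

lemma ncard_add_ncard_le_of_reflect {A B S : Set ℕ} {a b : ℕ} (hA : ∀ w ∈ A, w ≤ a)
    (hB : ∀ w ∈ B, w ≤ b) (hS : S.Finite) (hAS : (a + b + 1 - ·) '' A ⊆ S) (hBS : B ⊆ S) :
    A.ncard + B.ncard ≤ S.ncard := by
  have hinj : Set.InjOn (a + b + 1 - ·) A := fun x hx y hy h => by
    have := hA x hx; have := hA y hy; simp only at h; omega
  have hdisj : Disjoint ((a + b + 1 - ·) '' A) B := by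
    rw [Set.disjoint_left]
    rintro _ ⟨x, hx, rfl⟩ hxB
    have := hA x hx; have := hB _ hxB
    dsimp only at this
    omega
  calc A.ncard + B.ncard = ((a + b + 1 - ·) '' A ∪ B).ncard := by
        rw [Set.ncard_union_eq hdisj (hS.subset hAS) (hS.subset hBS), hinj.ncard_image]
    _ ≤ S.ncard := Set.ncard_le_ncard (Set.union_subset hAS hBS) hS

section Amalgam

variable {V₁ V₂ : Type*} {T₁ : SimpleGraph V₁} {T₂ : SimpleGraph V₂} {u₁ : V₁} {u₂ : V₂}

open Classical in
noncomputable def amalgamInr (u₁ : V₁) (u₂ : V₂) (v : V₂) : V₁ ⊕ {v : V₂ // v ≠ u₂} :=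
  if h : v = u₂ then Sum.inl u₁ else Sum.inr ⟨v, h⟩

lemma amalgamInr_injective : Injective (amalgamInr u₁ u₂) := by
  intro v w h
  by_cases hv : v = u₂ <;> by_cases hw : w = u₂ <;> simp_all [amalgamInr]

lemma sumElim_comp_amalgamInr {φ₁ : V₁ → ℕ} {φ₂ : V₂ → ℕ} (h : φ₁ u₁ = φ₂ u₂) :
    Sum.elim φ₁ (fun v : {v // v ≠ u₂} => φ₂ v) ∘ amalgamInr u₁ u₂ = φ₂ := by
  funext v
  by_cases hv : v = u₂ <;> simp [amalgamInr, hv, h]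

variable (T₁ T₂ u₁ u₂) in
def amalgamInlHom : T₁ →g amalgam T₁ T₂ u₁ u₂ where
  toFun := Sum.inl
  map_rel' h := by simp [amalgam, fromRel_adj, h, h.ne]

variable (T₁ T₂ u₁ u₂) in
noncomputable def amalgamInrHom : T₂ →g amalgam T₁ T₂ u₁ u₂ where
  toFun := amalgamInr u₁ u₂
  map_rel' {v w} h := by
    by_cases hv : v = u₂ <;> by_cases hw : w = u₂
    · exact absurd (hv.trans hw.symm) h.ne
    · subst hv
      simp [amalgamInr, hw, amalgam, fromRel_adj, h]
    · subst hw
      simp [amalgamInr, hv, amalgam, fromRel_adj, h.symm]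
    · simp [amalgamInr, hv, hw, amalgam, fromRel_adj, h, h.ne]

lemma amalgam_adj_cases {a b : V₁ ⊕ {v : V₂ // v ≠ u₂}} (h : (amalgam T₁ T₂ u₁ u₂).Adj a b) :
    (∃ x y, T₁.Adj x y ∧ a = Sum.inl x ∧ b = Sum.inl y) ∨
      ∃ v w, T₂.Adj v w ∧ a = amalgamInr u₁ u₂ v ∧ b = amalgamInr u₁ u₂ w := by
  have hinr (v : {v : V₂ // v ≠ u₂}) : Sum.inr v = amalgamInr u₁ u₂ v.1 := by
    simp [amalgamInr, v.2]
  have hinl : Sum.inl u₁ = amalgamInr u₁ u₂ u₂ := by simp [amalgamInr]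
  rcases a with x | v <;> rcases b with y | w <;>
    simp only [amalgam, fromRel_adj, ne_eq, reduceCtorEq, not_false_eq_true, true_and,
      Sum.inl.injEq, Sum.inr.injEq, or_false, false_or] at h
  · exact .inl ⟨x, y, h.2.elim id .symm, rfl, rfl⟩
  · exact .inr ⟨u₂, w, h.2, by rw [h.1, hinl], hinr w⟩
  · exact .inr ⟨v, u₂, h.2.symm, hinr v, by rw [h.1, hinl]⟩
  · exact .inr ⟨v, w, h.2.elim id .symm, hinr v, hinr w⟩

lemma SeparatesAt.amalgam {g : V₁ ⊕ {v : V₂ // v ≠ u₂} → ℕ} {d : ℕ}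
    (h₁ : SeparatesAt T₁ (g ∘ Sum.inl) d) (h₂ : SeparatesAt T₂ (g ∘ amalgamInr u₁ u₂) d) :
    SeparatesAt (amalgam T₁ T₂ u₁ u₂) g d := by
  intro a b hab
  rcases amalgam_adj_cases hab with ⟨x, y, hxy, rfl, rfl⟩ | ⟨v, w, hvw, rfl, rfl⟩
  exacts [h₁ x y hxy, h₂ v w hvw]

lemma ncard_edgeSet_add_le_amalgam [Finite V₁] [Finite V₂] :
    T₁.edgeSet.ncard + T₂.edgeSet.ncard ≤ (amalgam T₁ T₂ u₁ u₂).edgeSet.ncard := by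
  set E₁ := Sym2.map (amalgamInlHom T₁ T₂ u₁ u₂) '' T₁.edgeSet
  set E₂ := Sym2.map (amalgamInrHom T₁ T₂ u₁ u₂) '' T₂.edgeSet
  have hdisj : Disjoint E₁ E₂ := by
    rw [Set.disjoint_left]
    rintro _ ⟨e₁, -, rfl⟩ ⟨e₂, he₂, he⟩
    induction e₂ using Sym2.ind with
    | _ v w =>
      -- an edge of `T₂` has an end `z ≠ u₂`, which lands in the right summand
      have hinr (z : V₂) (hz : z ≠ u₂) (hzm : z ∈ s(v, w)) : False := by
        obtain ⟨x, -, hx⟩ := Sym2.mem_map.1 (he ▸ Sym2.mem_map.2 ⟨z, hzm, rfl⟩ :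
          amalgamInr u₁ u₂ z ∈ Sym2.map (amalgamInlHom T₁ T₂ u₁ u₂) e₁)
        simp [amalgamInlHom, amalgamInr, hz] at hx
      by_cases hv : v = u₂
      · exact hinr w (fun hw => he₂.ne (hv.trans hw.symm)) (Sym2.mem_mk_right v w)
      · exact hinr v hv (Sym2.mem_mk_left v w)
  have hE₁ : E₁.ncard = T₁.edgeSet.ncard :=
    Set.ncard_image_of_injective _ (Sym2.map.injective Sum.inl_injective)
  have hE₂ : E₂.ncard = T₂.edgeSet.ncard :=
    Set.ncard_image_of_injective _ (Sym2.map.injective amalgamInr_injective)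
  calc T₁.edgeSet.ncard + T₂.edgeSet.ncard = (E₁ ∪ E₂).ncard := by
        rw [Set.ncard_union_eq hdisj, hE₁, hE₂]
    _ ≤ (amalgam T₁ T₂ u₁ u₂).edgeSet.ncard := by
        refine Set.ncard_le_ncard (Set.union_subset ?_ ?_)
        all_goals rintro _ ⟨e, he, rfl⟩; exact Hom.map_mem_edgeSet _ he

noncomputable def amalgamLabeling (T₁ : SimpleGraph V₁) (T₂ : SimpleGraph V₂) (u₂ : V₂)
    (f₁ : V₁ → ℕ) (f₂ : V₂ → ℕ) (d₁ : ℕ) : V₁ ⊕ {v : V₂ // v ≠ u₂} → ℕ :=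
  Sum.elim (reflectLabeling f₁ d₁ (T₁.edgeSet.ncard + T₂.edgeSet.ncard + 1))
    fun v => f₂ v + d₁

section amalgamLabeling

variable {f₁ : V₁ → ℕ} {f₂ : V₂ → ℕ} {d₁ d₂ : ℕ}

lemma amalgamLabeling_comp_amalgamInr (hu₁ : f₁ u₁ = 0) (hu₂ : f₂ u₂ = 0) :
    amalgamLabeling T₁ T₂ u₂ f₁ f₂ d₁ ∘ amalgamInr u₁ u₂ = fun v => f₂ v + d₁ :=
  sumElim_comp_amalgamInr (φ₂ := fun v => f₂ v + d₁) (by simp [reflectLabeling, hu₁, hu₂])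

lemma amalgamLabeling_injective (hf₁ : IsBipartiteLabeling T₁ f₁) (hf₂ : IsBipartiteLabeling T₂ f₂)
    (hu₂ : f₂ u₂ = 0) : Injective (amalgamLabeling T₁ T₂ u₂ f₁ f₂ d₁) := by
  refine (reflectLabeling_injective hf₁.1 fun x => ?_).sumElim
    (fun v w h => Subtype.ext (hf₂.1 (Nat.add_right_cancel h))) fun x v => ?_
  · have := hf₁.2.1 x; omega
  · have hv : f₂ v ≠ 0 := hu₂ ▸ hf₂.1.ne v.2
    have := hf₁.2.1 x; have := hf₂.2.1 v
    unfold reflectLabeling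
    split_ifs <;> omega

lemma amalgamLabeling_le (hf₂ : IsBipartiteLabeling T₂ f₂) (hd₁ : d₁ ≤ T₁.edgeSet.ncard)
    (a : V₁ ⊕ {v : V₂ // v ≠ u₂}) :
    amalgamLabeling T₁ T₂ u₂ f₁ f₂ d₁ a ≤ T₁.edgeSet.ncard + T₂.edgeSet.ncard := by
  rcases a with x | v
  · exact Nat.le_of_lt_succ (reflectLabeling_lt (by omega) x)
  · have := hf₂.2.1 v; simp only [amalgamLabeling, Sum.elim_inr]; omega

lemma separatesAt_amalgamLabeling (hf₁ : IsBipartiteLabeling T₁ f₁) (hu₁ : f₁ u₁ = 0)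
    (hu₂ : f₂ u₂ = 0) (hsep₁ : SeparatesAt T₁ f₁ d₁) (hsep₂ : SeparatesAt T₂ f₂ d₂)
    (hd₂ : d₂ ≤ T₂.edgeSet.ncard) :
    SeparatesAt (amalgam T₁ T₂ u₁ u₂) (amalgamLabeling T₁ T₂ u₂ f₁ f₂ d₁) (d₁ + d₂) := by
  refine .amalgam (hsep₁.of_le_iff (reflectLabeling_le_add_iff fun x => ?_)) ?_
  · have := hf₁.2.1 x; omega
  · rw [amalgamLabeling_comp_amalgamInr hu₁ hu₂, add_comm d₁]
    exact hsep₂.add_const d₁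

lemma isBipartiteLabeling_amalgamLabeling [Finite V₁] [Finite V₂]
    (hf₁ : IsBipartiteLabeling T₁ f₁) (hf₂ : IsBipartiteLabeling T₂ f₂) (hu₁ : f₁ u₁ = 0)
    (hu₂ : f₂ u₂ = 0) (hsep₁ : SeparatesAt T₁ f₁ d₁) (hd₁ : d₁ ≤ T₁.edgeSet.ncard)
    (hsep₂ : SeparatesAt T₂ f₂ d₂) (hd₂ : d₂ ≤ T₂.edgeSet.ncard) :
    IsBipartiteLabeling (amalgam T₁ T₂ u₁ u₂) (amalgamLabeling T₁ T₂ u₂ f₁ f₂ d₁) :=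
  (separatesAt_amalgamLabeling hf₁ hu₁ hu₂ hsep₁ hsep₂ hd₂).isBipartiteLabeling
    (amalgamLabeling_injective hf₁ hf₂ hu₂)
    fun a => (amalgamLabeling_le hf₂ hd₁ a).trans ncard_edgeSet_add_le_amalgam

lemma distinctWeightCount_add_le_amalgamLabeling [Finite V₁] [Finite V₂]
    (hf₁ : IsBipartiteLabeling T₁ f₁) (hf₂ : IsBipartiteLabeling T₂ f₂) (hu₁ : f₁ u₁ = 0)
    (hu₂ : f₂ u₂ = 0) (hsep₁ : SeparatesAt T₁ f₁ d₁) :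
    distinctWeightCount T₁ f₁ + distinctWeightCount T₂ f₂ ≤
      distinctWeightCount (amalgam T₁ T₂ u₁ u₂) (amalgamLabeling T₁ T₂ u₂ f₁ f₂ d₁) := by
  set g := amalgamLabeling T₁ T₂ u₂ f₁ f₂ d₁
  have hW₁ := (amalgamInlHom T₁ T₂ u₁ u₂).image_edgeWt_comp_subset g
  have hW₂ := (amalgamInrHom T₁ T₂ u₁ u₂).image_edgeWt_comp_subset g
  rw [show g ∘ amalgamInlHom T₁ T₂ u₁ u₂ = reflectLabeling f₁ d₁ _ from rfl,
    image_edgeWt_reflectLabeling hsep₁ fun x => (hf₁.2.1 x).trans (by omega)] at hW₁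
  rw [show g ∘ amalgamInrHom T₁ T₂ u₁ u₂ = _ from amalgamLabeling_comp_amalgamInr hu₁ hu₂,
    edgeWt_add_const] at hW₂
  exact ncard_add_ncard_le_of_reflect (fun _ ⟨e, _, he⟩ => he ▸ edgeWt_le hf₁.2.1 e)
    (fun _ ⟨e, _, he⟩ => he ▸ edgeWt_le hf₂.2.1 e) (Set.toFinite _) hW₁ hW₂

end amalgamLabeling

end Amalgam

theorem stmt12_general {V₁ V₂ : Type}
    (T₁ : SimpleGraph V₁) (T₂ : SimpleGraph V₂) (u₁ : V₁) (u₂ : V₂)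
    (f₁ : V₁ → ℕ) (f₂ : V₂ → ℕ)
    (hf₁ : IsBipartiteLabeling T₁ f₁) (hf₂ : IsBipartiteLabeling T₂ f₂)
    (hu₁ : f₁ u₁ = 0) (hu₂ : f₂ u₂ = 0) :
    ∃ f : V₁ ⊕ {v : V₂ // v ≠ u₂} → ℕ,
      IsBipartiteLabeling (amalgam T₁ T₂ u₁ u₂) f ∧
      distinctWeightCount T₁ f₁ + distinctWeightCount T₂ f₂ ≤
        distinctWeightCount (amalgam T₁ T₂ u₁ u₂) f := by
  have := hf₁.finite
  have := hf₂.finite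
  obtain ⟨d₁, hd₁, hsep₁⟩ := hf₁.exists_separatesAt
  obtain ⟨d₂, hd₂, hsep₂⟩ := hf₂.exists_separatesAt
  exact ⟨amalgamLabeling T₁ T₂ u₂ f₁ f₂ d₁,
    isBipartiteLabeling_amalgamLabeling hf₁ hf₂ hu₁ hu₂ hsep₁ hd₁ hsep₂ hd₂,
    distinctWeightCount_add_le_amalgamLabeling hf₁ hf₂ hu₁ hu₂ hsep₁⟩

theorem stmt12 {V₁ V₂ : Type} [Fintype V₁] [Fintype V₂]
    (T₁ : SimpleGraph V₁) (T₂ : SimpleGraph V₂) (u₁ : V₁) (u₂ : V₂)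
    (h₁ : T₁.IsTree) (h₂ : T₂.IsTree) (f₁ : V₁ → ℕ) (f₂ : V₂ → ℕ)
    (hf₁ : IsBipartiteLabeling T₁ f₁) (hf₂ : IsBipartiteLabeling T₂ f₂)
    (hu₁ : f₁ u₁ = 0) (hu₂ : f₂ u₂ = 0) :
    ∃ f : V₁ ⊕ {v : V₂ // v ≠ u₂} → ℕ,
      IsBipartiteLabeling (amalgam T₁ T₂ u₁ u₂) f ∧
      distinctWeightCount T₁ f₁ + distinctWeightCount T₂ f₂ ≤
        distinctWeightCount (amalgam T₁ T₂ u₁ u₂) f :=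
  stmt12_general T₁ T₂ u₁ u₂ f₁ f₂ hf₁ hf₂ hu₁ hu₂
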